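/- For every complex number α and every natural number n ≥ 1: Σ_{k=1}^n H_k(α)/k = H_n(α) · H_n + H_n^{(2)}(α) − Σ_{k=1}^n α^k H_k / k, where H_n^{(2)}(α) = Σ_{k=1}^n α^k/k². (For α = 1 this reduces to Σ_{k=1}^n H_k/k = (H_n² + H_n^{(2)})/2.) -/

import Mathlib

open Finset

/-- The generalized harmonic number `H_n(α) = ∑_{k=1}^n α^k / k`. -/
noncomputable def genHarmonic (α : ℂ) (n : ℕ) : ℂ :=
  ∑ k ∈ Finset.Icc 1 n, α ^ k / (k : ℂ)

/-- The generalized harmonic number of order 2, `H_n^{(2)}(α) = ∑_{k=1}^n α^k / k²`. -/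
noncomputable def genHarmonic2 (α : ℂ) (n : ℕ) : ℂ :=
  ∑ k ∈ Finset.Icc 1 n, α ^ k / ((k : ℂ) ^ 2)

lemma genHarmonic_succ (α : ℂ) (n : ℕ) :
    genHarmonic α (n + 1) = genHarmonic α n + α ^ (n + 1) / ((n : ℂ) + 1) := by
  unfold genHarmonic
  rw [Finset.sum_Icc_succ_top (by omega)]
  push_cast
  ring

lemma genHarmonic2_succ (α : ℂ) (n : ℕ) :
    genHarmonic2 α (n + 1) = genHarmonic2 α n + α ^ (n + 1) / ((n : ℂ) + 1) ^ 2 := by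
  unfold genHarmonic2
  rw [Finset.sum_Icc_succ_top (by omega)]
  push_cast
  ring

theorem stmt_13 (α : ℂ) (n : ℕ) (hn : 1 ≤ n) :
    ∑ k ∈ Finset.Icc 1 n, genHarmonic α k / (k : ℂ) =
      genHarmonic α n * genHarmonic 1 n + genHarmonic2 α n -
        ∑ k ∈ Finset.Icc 1 n, α ^ k * genHarmonic 1 k / (k : ℂ) := by
  induction n, hn using Nat.le_induction with
  | base =>
      simp [genHarmonic, genHarmonic2]
  | succ n hn ih =>
      rw [Finset.sum_Icc_succ_top (by omega), Finset.sum_Icc_succ_top (by omega),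
        genHarmonic_succ, genHarmonic_succ, genHarmonic2_succ]
      push_cast
      have h1 : (n : ℂ) + 1 ≠ 0 := by exact Nat.cast_add_one_ne_zero n
      field_simp
      linear_combination ((n : ℂ) + 1) ^ 2 * ih
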